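/- For every element f of PL_2(ℝ) there exist dyadic subdivisions D and R of ℝ and an order-preserving bijection between their intervals such that f maps each interval of D affinely (linearly) onto the corresponding interval of R. -/

import Mathlib

/-!
Choose `n` so large that all breakpoints of `f` and their images lie in `2⁻ⁿℤ`, with room to spare
for the slopes: if `f` has slope `2 ^ z` on a piece, the image of a breakpoint lies in `2^(z-n)ℤ`.
Then each cell of `2⁻ⁿℤ` lies in one affine piece and is mapped onto a cell of `2^(z-n)ℤ`, a
standard dyadic interval. Subdivide a large interval `[N, M]` containing the breakpoints into the
cells of `2⁻ⁿℤ` and the rest of `ℝ` into unit intervals, on which `f` is an integer translation.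
-/

/-- A real number is dyadic rational if it has the form `k / 2 ^ n`. -/
def IsDyadic (t : ℝ) : Prop := ∃ (k : ℤ) (n : ℕ), t = (k : ℝ) / 2 ^ n

/-- An (orientation-preserving, i.e. order-preserving) homeomorphism of `ℝ`
belongs to `PL₂(ℝ)` if it has finitely many breakpoints `t₀ < t₁ < ⋯ < tₘ`,
each with dyadic rational coordinates, it is affine with slope an integer
power of `2` on each piece `[tᵢ, tᵢ₊₁]`, and there are integers `a`, `b` with
`f(s) = s - a` for `s ≤ t₀` and `f(s) = s - b` for `s ≥ tₘ`. -/
def IsPL2R (f : ℝ ≃o ℝ) : Prop :=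
  ∃ (m : ℕ) (t : Fin (m + 1) → ℝ) (z : Fin m → ℤ) (a b : ℤ),
    StrictMono t ∧ (∀ i, IsDyadic (t i) ∧ IsDyadic (f (t i))) ∧
    (∀ s : ℝ, s ≤ t 0 → f s = s - a) ∧
    (∀ s : ℝ, t (Fin.last m) ≤ s → f s = s - b) ∧
    (∀ (i : Fin m), ∀ s ∈ Set.Icc (t i.castSucc) (t i.succ),
      f s = f (t i.castSucc) + (2 : ℝ) ^ (z i) * (s - t i.castSucc))

open Filter Set

theorem Fin.le_zero_or_last_le_or_exists_of_forall_notMem_Ioo {α : Type*} [LinearOrder α]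
    {m : ℕ} (t : Fin (m + 1) → α) {u v : α} (h : ∀ i, t i ∉ Ioo u v) :
    v ≤ t 0 ∨ t (Fin.last m) ≤ u ∨ ∃ i : Fin m, t i.castSucc ≤ u ∧ v ≤ t i.succ := by
  induction m with
  | zero =>
    have := h 0
    simp only [mem_Ioo, not_and, not_lt] at this
    by_cases hu : u < t 0
    · exact Or.inl (this hu)
    · exact Or.inr (Or.inl (not_lt.1 hu))
  | succ m ih =>
    rcases ih (fun i => t i.castSucc) (fun i => h _) with h₀ | hlast | ⟨i, hi⟩
    · exact Or.inl h₀
    · have := h (Fin.last (m + 1))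
      simp only [mem_Ioo, not_and, not_lt] at this
      by_cases hu : u < t (Fin.last (m + 1))
      · exact Or.inr (Or.inr ⟨Fin.last m, hlast, by simpa using this hu⟩)
      · exact Or.inr (Or.inl (not_lt.1 hu))
    · exact Or.inr (Or.inr ⟨i.castSucc, hi.1, Fin.succ_castSucc i ▸ hi.2⟩)

/-- `2⁻ⁿℤ`, with an integer level `n` so that multiplying by a slope `2 ^ z` just shifts it. -/
noncomputable def dyadicLattice (n : ℤ) : AddSubgroup ℝ := AddSubgroup.zmultiples ((2 : ℝ) ^ (-n))

theorem mem_dyadicLattice_iff {n : ℤ} {x : ℝ} :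
    x ∈ dyadicLattice n ↔ ∃ k : ℤ, x = k * (2 : ℝ) ^ (-n) := by
  simp only [dyadicLattice, AddSubgroup.mem_zmultiples_iff, zsmul_eq_mul, eq_comm]

theorem dyadicLattice_mono : Monotone dyadicLattice := by
  intro n m hnm
  obtain ⟨d, rfl⟩ : ∃ d : ℕ, m = n + d := ⟨(m - n).toNat, by omega⟩
  refine AddSubgroup.zmultiples_le.2 (mem_dyadicLattice_iff.2 ⟨2 ^ d, ?_⟩)
  rw [Int.cast_pow, Int.cast_ofNat, ← zpow_natCast, ← zpow_add₀ two_ne_zero]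
  congr 1
  ring

theorem intCast_mem_dyadicLattice {n : ℤ} (hn : 0 ≤ n) (k : ℤ) : (k : ℝ) ∈ dyadicLattice n :=
  dyadicLattice_mono hn (mem_dyadicLattice_iff.2 ⟨k, by simp⟩)

theorem zpow_mul_mem_dyadicLattice {n : ℤ} {x : ℝ} (z : ℤ) (hx : x ∈ dyadicLattice n) :
    (2 : ℝ) ^ z * x ∈ dyadicLattice (n - z) := by
  obtain ⟨k, rfl⟩ := mem_dyadicLattice_iff.1 hx
  refine mem_dyadicLattice_iff.2 ⟨k, ?_⟩
  rw [mul_left_comm, ← zpow_add₀ two_ne_zero, neg_sub, sub_eq_add_neg, add_comm z]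

theorem IsDyadic.eventually_mem_dyadicLattice {x : ℝ} (hx : IsDyadic x) :
    ∀ᶠ n in atTop, x ∈ dyadicLattice n := by
  obtain ⟨k, e, rfl⟩ := hx
  refine eventually_atTop.2 ⟨e, fun n hn => dyadicLattice_mono hn ?_⟩
  exact mem_dyadicLattice_iff.2 ⟨k, by rw [zpow_neg, zpow_natCast, div_eq_mul_inv]⟩

theorem notMem_Ioo_of_mem_dyadicLattice {n : ℤ} {x y : ℝ} (hx : x ∈ dyadicLattice n)
    (hy : y ∈ dyadicLattice n) : y ∉ Ioo x (x + 2 ^ (-n)) := by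
  obtain ⟨k, rfl⟩ := mem_dyadicLattice_iff.1 hx
  obtain ⟨l, rfl⟩ := mem_dyadicLattice_iff.1 hy
  rintro ⟨hkl, hlk⟩
  have hpos : (0 : ℝ) < 2 ^ (-n) := by positivity
  have h₁ : k < l := by exact_mod_cast lt_of_mul_lt_mul_right hkl hpos.le
  have h₂ : l < k + 1 := by
    have : (l : ℝ) * 2 ^ (-n) < (k + 1) * 2 ^ (-n) := by linarith
    exact_mod_cast lt_of_mul_lt_mul_right this hpos.le
  omega

theorem exists_eq_div_pow_of_mem_dyadicLattice {n : ℤ} {x : ℝ} (hn : 0 ≤ n)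
    (hx : x ∈ dyadicLattice n) :
    ∃ (k : ℤ) (e : ℕ), x = k / 2 ^ e ∧ x + 2 ^ (-n) = (k + 1) / 2 ^ e := by
  lift n to ℕ using hn
  obtain ⟨k, rfl⟩ := mem_dyadicLattice_iff.1 hx
  refine ⟨k, n, ?_, ?_⟩ <;> rw [zpow_neg, zpow_natCast] <;> ring

/-- The condition `f x ∈ 2^(z-n)ℤ` is what makes the image of the cell `[x, x + 2⁻ⁿ]` a standard
dyadic interval. -/
def IsDyadicAffineCell (f : ℝ → ℝ) (x : ℝ) (n : ℤ) : Prop :=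
  ∃ z : ℤ, z ≤ n ∧ f x ∈ dyadicLattice (n - z) ∧
    ∀ s ∈ Icc x (x + 2 ^ (-n)), f s = f x + 2 ^ z * (s - x)

namespace IsDyadicAffineCell

variable {f : ℝ → ℝ} {x : ℝ} {n : ℤ}

theorem exists_image_eq_div_pow (h : IsDyadicAffineCell f x n) :
    ∃ (k : ℤ) (e : ℕ), f x = k / 2 ^ e ∧ f (x + 2 ^ (-n)) = (k + 1) / 2 ^ e := by
  obtain ⟨z, hz, hfx, haff⟩ := h
  have hend : f (x + 2 ^ (-n)) = f x + 2 ^ (-(n - z)) := by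
    rw [haff _ ⟨by simp only [le_add_iff_nonneg_right]; positivity, le_rfl⟩, add_sub_cancel_left,
      ← zpow_add₀ two_ne_zero, neg_sub, sub_eq_add_neg]
  rw [hend]
  exact exists_eq_div_pow_of_mem_dyadicLattice (by omega) hfx

theorem eq_add_slope_mul (h : IsDyadicAffineCell f x n) :
    ∀ s ∈ Icc x (x + 2 ^ (-n)),
      f s = f x + (f (x + 2 ^ (-n)) - f x) / (x + 2 ^ (-n) - x) * (s - x) := by
  obtain ⟨z, -, -, haff⟩ := h
  intro s hs
  have hpos : (0 : ℝ) < 2 ^ (-n) := by positivity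
  rw [haff s hs, haff _ ⟨by linarith, le_rfl⟩]
  field_simp
  ring

end IsDyadicAffineCell

theorem isDyadicAffineCell_of_eq_sub_intCast {f : ℝ → ℝ} {x : ℝ} {n : ℤ} (hn : 0 ≤ n)
    (hx : x ∈ dyadicLattice n) (c : ℤ) (h : ∀ s ∈ Icc x (x + 2 ^ (-n)), f s = s - c) :
    IsDyadicAffineCell f x n := by
  have hfx : f x = x - c := h x ⟨le_rfl, by simp only [le_add_iff_nonneg_right]; positivity⟩
  refine ⟨0, hn, ?_, fun s hs => ?_⟩
  · rw [hfx, sub_zero]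
    exact sub_mem hx (intCast_mem_dyadicLattice hn c)
  · rw [h s hs, hfx, zpow_zero]
    ring

theorem isDyadicAffineCell_of_affine {f : ℝ → ℝ} {p q x : ℝ} {n z : ℤ}
    (hp : p ∈ dyadicLattice n) (hx : x ∈ dyadicLattice n) (hpx : p ≤ x) (hxq : x + 2 ^ (-n) ≤ q)
    (hz : z ≤ n) (hfp : f p ∈ dyadicLattice (n - z))
    (haff : ∀ s ∈ Icc p q, f s = f p + 2 ^ z * (s - p)) : IsDyadicAffineCell f x n := by
  have hfx : f x = f p + 2 ^ z * (x - p) :=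
    haff x ⟨hpx, le_trans (by simp only [le_add_iff_nonneg_right]; positivity) hxq⟩
  refine ⟨z, hz, ?_, fun s hs => ?_⟩
  · rw [hfx]
    exact add_mem hfp (zpow_mul_mem_dyadicLattice z (sub_mem hx hp))
  · rw [haff s ⟨hpx.trans hs.1, hs.2.trans hxq⟩, hfx]
    ring

/-- Once the breakpoints lie in `2⁻ⁿℤ`, no cell of `2⁻ⁿℤ` straddles one, so each cell sits in a
single affine piece. -/
theorem IsPL2R.exists_dyadic_cells {f : ℝ ≃o ℝ} (hf : IsPL2R f) :
    ∃ N M : ℤ, N ≤ M ∧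
      (∀ k : ℤ, k + 1 ≤ N ∨ M ≤ k → ∃ c : ℤ, ∀ s ∈ Icc (k : ℝ) (k + 1), f s = s - c) ∧
      ∃ n : ℕ, ∀ x ∈ dyadicLattice n, IsDyadicAffineCell f x n := by
  obtain ⟨m, t, z, a, b, ht, hdy, hleft, hright, haff⟩ := hf
  have hlevel : ∀ᶠ n : ℕ in atTop, (∀ i, t i ∈ dyadicLattice n) ∧
      ∀ i : Fin m, z i ≤ n ∧ f (t i.castSucc) ∈ dyadicLattice (n - z i) := by
    refine (eventually_all.2 fun i => ?_).and (eventually_all.2 fun i => ?_)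
    · exact tendsto_natCast_atTop_atTop.eventually (hdy i).1.eventually_mem_dyadicLattice
    · refine (tendsto_natCast_atTop_atTop.eventually (eventually_ge_atTop (z i))).and ?_
      simpa only [sub_eq_add_neg] using (tendsto_atTop_add_const_right _ (-z i)
        tendsto_natCast_atTop_atTop).eventually (hdy _).2.eventually_mem_dyadicLattice
  obtain ⟨n, ht_mem, hz⟩ := hlevel.exists
  refine ⟨⌊t 0⌋, ⌈t (Fin.last m)⌉, ?_, ?_, n, fun x hx => ?_⟩
  · exact_mod_cast (Int.floor_le _).trans
      ((ht.monotone (Fin.zero_le _)).trans (Int.le_ceil _))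
  · rintro k (hk | hk)
    · refine ⟨a, fun s hs => hleft s (hs.2.trans ?_)⟩
      exact (by exact_mod_cast hk : (k : ℝ) + 1 ≤ ⌊t 0⌋).trans (Int.floor_le _)
    · refine ⟨b, fun s hs => hright s ((Int.le_ceil _).trans (hs.1.trans' ?_))⟩
      exact_mod_cast hk
  have hn : (0 : ℤ) ≤ n := Int.natCast_nonneg n
  rcases Fin.le_zero_or_last_le_or_exists_of_forall_notMem_Ioo t
      (fun i => notMem_Ioo_of_mem_dyadicLattice hx (ht_mem i)) with h₀ | hlast | ⟨i, hi₁, hi₂⟩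
  · exact isDyadicAffineCell_of_eq_sub_intCast hn hx a fun s hs => hleft s (hs.2.trans h₀)
  · exact isDyadicAffineCell_of_eq_sub_intCast hn hx b fun s hs => hright s (hlast.trans hs.1)
  · exact isDyadicAffineCell_of_affine (ht_mem _) hx hi₁ hi₂ (hz i).1 (hz i).2 (haff i)

/-- Unit intervals left of `N`, the cells of `2⁻ⁿℤ` in `[N, M]` (indices `0 ≤ j < (M - N) 2ⁿ`),
and unit intervals right of `M`. -/
noncomputable def dyadicGrid (N M : ℤ) (n : ℕ) (j : ℤ) : ℝ :=
  if j ≤ 0 then N + j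
  else if j ≤ (M - N) * 2 ^ n then N + j * 2 ^ (-(n : ℤ))
  else ((M + (j - (M - N) * 2 ^ n) : ℤ) : ℝ)

namespace dyadicGrid

variable {N M : ℤ} {n : ℕ} {j : ℤ}

theorem of_nonpos (hj : j ≤ 0) : dyadicGrid N M n j = N + j := if_pos hj

theorem of_mem_Icc (hj : j ∈ Icc 0 ((M - N) * 2 ^ n)) :
    dyadicGrid N M n j = N + j * 2 ^ (-(n : ℤ)) := by
  rcases hj.1.eq_or_lt with rfl | hpos
  · simp [of_nonpos]
  · rw [dyadicGrid, if_neg hpos.not_ge, if_pos hj.2]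

theorem of_ge (hNM : N ≤ M) (hj : (M - N) * 2 ^ n ≤ j) :
    dyadicGrid N M n j = ((M + (j - (M - N) * 2 ^ n) : ℤ) : ℝ) := by
  have hL : 0 ≤ (M - N) * 2 ^ n := mul_nonneg (sub_nonneg.2 hNM) (by positivity)
  rcases hj.eq_or_lt with rfl | hlt
  · rw [of_mem_Icc ⟨hL, le_rfl⟩, zpow_neg, zpow_natCast]
    push_cast
    field_simp
    ring
  · rw [dyadicGrid, if_neg (by omega), if_neg hlt.not_ge]

theorem fine (hj : j ∈ Ico 0 ((M - N) * 2 ^ n)) :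
    dyadicGrid N M n j ∈ dyadicLattice n ∧
      dyadicGrid N M n (j + 1) = dyadicGrid N M n j + 2 ^ (-(n : ℤ)) := by
  obtain ⟨hj₀, hj₁⟩ := hj
  rw [of_mem_Icc ⟨hj₀, hj₁.le⟩, of_mem_Icc ⟨by omega, by omega⟩]
  refine ⟨add_mem (intCast_mem_dyadicLattice (by positivity) N)
    (mem_dyadicLattice_iff.2 ⟨j, rfl⟩), ?_⟩
  push_cast
  ring

theorem coarse (hNM : N ≤ M) (hj : j ∉ Ico 0 ((M - N) * 2 ^ n)) :
    ∃ k : ℤ, (k + 1 ≤ N ∨ M ≤ k) ∧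
      dyadicGrid N M n j = k ∧ dyadicGrid N M n (j + 1) = k + 1 := by
  rcases not_and_or.1 hj with hj | hj <;> push Not at hj
  · refine ⟨N + j, by omega, by rw [of_nonpos hj.le]; push_cast; rfl, ?_⟩
    rw [of_nonpos (by omega)]
    push_cast
    ring
  · refine ⟨M + (j - (M - N) * 2 ^ n), by omega, of_ge hNM hj, ?_⟩
    rw [of_ge hNM (by omega)]
    push_cast
    ring

theorem strictMono (hNM : N ≤ M) : StrictMono (dyadicGrid N M n) := by
  refine strictMono_int_of_lt_succ fun j => ?_
  by_cases hj : j ∈ Ico 0 ((M - N) * 2 ^ n)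
  · rw [(fine hj).2]
    simp only [lt_add_iff_pos_right]
    positivity
  · obtain ⟨k, -, hk, hk₁⟩ := coarse hNM hj
    rw [hk, hk₁]
    exact lt_add_one _

theorem tendsto_atTop (hNM : N ≤ M) : Tendsto (dyadicGrid N M n) atTop atTop := by
  refine (strictMono hNM).monotone.tendsto_atTop_atTop fun b => ?_
  refine ⟨max ((M - N) * 2 ^ n) (⌈b⌉ + (M - N) * 2 ^ n - M), ?_⟩
  rw [of_ge hNM (le_max_left _ _)]
  exact (Int.le_ceil b).trans (by exact_mod_cast (by omega))

theorem tendsto_atBot (hNM : N ≤ M) : Tendsto (dyadicGrid N M n) atBot atBot := by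
  refine (strictMono hNM).monotone.tendsto_atBot_atBot fun b => ⟨min 0 (⌊b⌋ - N), ?_⟩
  rw [of_nonpos (min_le_left _ _)]
  exact le_trans (by exact_mod_cast (by omega)) (Int.floor_le b)

variable {f : ℝ → ℝ}

theorem exists_isDyadicAffineCell (hNM : N ≤ M)
    (htrans : ∀ k : ℤ, k + 1 ≤ N ∨ M ≤ k → ∃ c : ℤ, ∀ s ∈ Icc (k : ℝ) (k + 1), f s = s - c)
    (hfine : ∀ x ∈ dyadicLattice n, IsDyadicAffineCell f x n) (j : ℤ) :
    ∃ ℓ : ℤ, 0 ≤ ℓ ∧ dyadicGrid N M n j ∈ dyadicLattice ℓ ∧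
      dyadicGrid N M n (j + 1) = dyadicGrid N M n j + 2 ^ (-ℓ) ∧
      IsDyadicAffineCell f (dyadicGrid N M n j) ℓ := by
  by_cases hj : j ∈ Ico 0 ((M - N) * 2 ^ n)
  · obtain ⟨hmem, hsucc⟩ := fine hj
    exact ⟨n, by positivity, hmem, hsucc, hfine _ hmem⟩
  · obtain ⟨k, hk, hTj, hTj₁⟩ := coarse hNM hj
    obtain ⟨c, hc⟩ := htrans k hk
    have hmem : dyadicGrid N M n j ∈ dyadicLattice 0 := hTj ▸ intCast_mem_dyadicLattice le_rfl k
    refine ⟨0, le_rfl, hmem, by simp [hTj, hTj₁], ?_⟩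
    exact isDyadicAffineCell_of_eq_sub_intCast le_rfl hmem c (by simpa [hTj] using hc)

theorem exists_image_eq_intCast (hNM : N ≤ M)
    (htrans : ∀ k : ℤ, k + 1 ≤ N ∨ M ≤ k → ∃ c : ℤ, ∀ s ∈ Icc (k : ℝ) (k + 1), f s = s - c)
    (hj : j ∉ Ico 0 ((M - N) * 2 ^ n)) :
    ∃ k : ℤ, f (dyadicGrid N M n j) = k ∧ f (dyadicGrid N M n (j + 1)) = k + 1 := by
  obtain ⟨k, hk, hTj, hTj₁⟩ := coarse hNM hj
  obtain ⟨c, hc⟩ := htrans k hk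
  refine ⟨k - c, ?_, ?_⟩
  · rw [hTj, hc k ⟨le_rfl, by linarith⟩]
    push_cast
    ring
  · rw [hTj₁, hc (k + 1) ⟨by linarith, le_rfl⟩]
    push_cast
    ring

end dyadicGrid

/-- For every `f ∈ PL₂(ℝ)` there exist dyadic subdivisions `D`, `R` of `ℝ`
(partitions of `ℝ` into standard dyadic intervals `[k/2ⁿ, (k+1)/2ⁿ]`, all but
finitely many of which are unit intervals `[j, j+1]` with `j ∈ ℤ`), indexed by
`ℤ` in increasing order, such that `f` maps the `j`-th interval of `D`
affinely onto the `j`-th interval of `R` (this indexing realizes an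
order-preserving bijection between the intervals). -/
theorem pl2R_exists_dyadic_subdivisions (f : ℝ ≃o ℝ) (hf : IsPL2R f) :
    ∃ t r : ℤ → ℝ,
      StrictMono t ∧ StrictMono r ∧
      Filter.Tendsto t Filter.atTop Filter.atTop ∧
      Filter.Tendsto t Filter.atBot Filter.atBot ∧
      Filter.Tendsto r Filter.atTop Filter.atTop ∧
      Filter.Tendsto r Filter.atBot Filter.atBot ∧
      (∀ j : ℤ, ∃ (k : ℤ) (n : ℕ),
        t j = (k : ℝ) / 2 ^ n ∧ t (j + 1) = ((k : ℝ) + 1) / 2 ^ n) ∧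
      (∀ j : ℤ, ∃ (k : ℤ) (n : ℕ),
        r j = (k : ℝ) / 2 ^ n ∧ r (j + 1) = ((k : ℝ) + 1) / 2 ^ n) ∧
      {j : ℤ | ¬ ∃ k : ℤ, t j = (k : ℝ) ∧ t (j + 1) = (k : ℝ) + 1}.Finite ∧
      {j : ℤ | ¬ ∃ k : ℤ, r j = (k : ℝ) ∧ r (j + 1) = (k : ℝ) + 1}.Finite ∧
      (∀ j : ℤ, f (t j) = r j ∧
        ∀ s ∈ Set.Icc (t j) (t (j + 1)),
          f s = r j + ((r (j + 1) - r j) / (t (j + 1) - t j)) * (s - t j)) := by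
  obtain ⟨N, M, hNM, htrans, n, hfine⟩ := hf.exists_dyadic_cells
  have hcell := dyadicGrid.exists_isDyadicAffineCell hNM htrans hfine
  refine ⟨dyadicGrid N M n, fun j => f (dyadicGrid N M n j), dyadicGrid.strictMono hNM,
    f.strictMono.comp (dyadicGrid.strictMono hNM), dyadicGrid.tendsto_atTop hNM,
    dyadicGrid.tendsto_atBot hNM, f.tendsto_atTop.comp (dyadicGrid.tendsto_atTop hNM),
    f.tendsto_atBot.comp (dyadicGrid.tendsto_atBot hNM), fun j => ?_, fun j => ?_,
    (finite_Ico 0 ((M - N) * 2 ^ n)).subset fun j hj => ?_,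
    (finite_Ico 0 ((M - N) * 2 ^ n)).subset fun j hj => ?_, fun j => ⟨rfl, ?_⟩⟩
  · obtain ⟨ℓ, hℓ, hmem, hsucc, -⟩ := hcell j
    exact hsucc ▸ exists_eq_div_pow_of_mem_dyadicLattice hℓ hmem
  · obtain ⟨ℓ, -, -, hsucc, hc⟩ := hcell j
    beta_reduce
    rw [hsucc]
    exact hc.exists_image_eq_div_pow
  · by_contra hj'
    obtain ⟨k, -, hTj, hTj₁⟩ := dyadicGrid.coarse hNM hj'
    exact hj ⟨k, hTj, hTj₁⟩
  · by_contra hj'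
    exact hj (dyadicGrid.exists_image_eq_intCast hNM htrans hj')
  · obtain ⟨ℓ, -, -, hsucc, hc⟩ := hcell j
    beta_reduce
    rw [hsucc]
    exact hc.eq_add_slope_mul
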